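/- arXiv:2404.12201 — 3 statements merged into one kernel-verified Lean document; each statement's English description precedes it below -/
import Mathlib

section
/- Let A₁ = ℕ ∩ ⋃_{n∈ℕ} [4^n, (2 - 1/n)·4^n), A₂ = ℕ ∩ ⋃_{n∈ℕ} [(2 + 1/n)·4^n, 4^{n+1}), and A = (A₁ ∩ 2ℕ) ∪ (A₂ ∩ (2ℕ+1)). Then the natural density of A equals 1/2 and there is no infinite set B ⊆ ℕ and t ∈ ℕ with B + B + t ⊆ A. -/
open Filter
open scoped Classical

noncomputable def countIn (A : Set ℕ) (N : ℕ) : ℕ :=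
  ((Finset.Icc 1 N).filter (fun n => n ∈ A)).card

noncomputable def upperDensity (A : Set ℕ) : ℝ :=
  limsup (fun N => (countIn A N : ℝ) / N) atTop

noncomputable def lowerDensity (A : Set ℕ) : ℝ :=
  liminf (fun N => (countIn A N : ℝ) / N) atTop

def hasDensity (A : Set ℕ) (d : ℝ) : Prop :=
  Tendsto (fun N => (countIn A N : ℝ) / N) atTop (nhds d)

/-!
On a block `[4^n, 4^(n+1))` the set `A` coincides with "even numbers up to `2·4^n`, odd numbers
after", except on the window `[(2 - 1/n)·4^n, (2 + 1/n)·4^n)` of length `2·4^n/n` (and at the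
endpoint `4^(n+1)`). The model set alternates, so on any subinterval of a block the count of `A`
is half the length up to `O(4^n/n)`; summing over the blocks below `N` gives
`|#(A ∩ [1, N]) - N/2| = O(N / log N)`.

If `b < b'` in `B` have the same parity, then `s = b + b' + t` and `u = 2b' + t` lie in `A` with the
same parity, hence in the same half of the same block. There `2s - u > 4^n/n > n`, so
`u < 4^(2s - u) = 4^(2b + t)`, which fails once `b'` is large.
-/

open Finset Topology

theorem countIn_sub_half_eq_sum (S : Set ℕ) (N : ℕ) :
    (countIn S N : ℝ) - N / 2 = ∑ m ∈ Ioc 0 N, ((if m ∈ S then 1 else 0) - 1 / 2) := by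
  rw [countIn, natCast_card_filter, sum_sub_distrib, ← Icc_add_one_left_eq_Ioc]
  simp [div_eq_mul_inv]

theorem abs_sub_le_sum_of_block_bound {F : ℕ → ℝ} {g : ℕ → ℝ} (q : ℕ)
    (hF : ∀ n a b : ℕ, 1 ≤ n → q ^ n ≤ a → a ≤ b → b ≤ q ^ (n + 1) → |F b - F a| ≤ g n)
    {K N : ℕ} (hK : 1 ≤ K) (hKN : q ^ K ≤ N) (hNK : N ≤ q ^ (K + 1)) :
    |F N - F q| ≤ ∑ n ∈ Icc 1 K, g n := by
  induction K, hK using Nat.le_induction generalizing N with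
  | base => simpa using hF 1 q N le_rfl (by simp) (by simpa using hKN) hNK
  | succ K hK ih =>
    have hmono : q ^ K ≤ q ^ (K + 1) := by
      rcases q with _ | q
      · simp [Nat.zero_pow (by omega : 0 < K)]
      · exact Nat.pow_le_pow_right (by omega) (by omega)
    rw [sum_Icc_succ_top (by omega)]
    calc |F N - F q| = |(F (q ^ (K + 1)) - F q) + (F N - F (q ^ (K + 1)))| := by ring_nf
      _ ≤ |F (q ^ (K + 1)) - F q| + |F N - F (q ^ (K + 1))| := abs_add_le _ _
      _ ≤ _ := add_le_add (ih hmono le_rfl) (hF (K + 1) _ N (by omega) le_rfl hKN hNK)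

theorem sum_Icc_four_pow_div_le (K : ℕ) : ∑ n ∈ Icc 1 K, (4 : ℝ) ^ n / n ≤ 2 * 4 ^ K / K := by
  induction K with
  | zero => simp
  | succ K ih =>
    rw [sum_Icc_succ_top (by omega)]
    rcases Nat.eq_zero_or_pos K with rfl | hK
    · norm_num
    have hK : (1 : ℝ) ≤ K := by exact_mod_cast hK
    have hstep : 2 * (4 : ℝ) ^ K / K + 4 ^ (K + 1) / (K + 1 : ℕ) ≤
        2 * 4 ^ (K + 1) / (K + 1 : ℕ) := by
      rw [div_add_div _ _ (by positivity) (by positivity),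
        div_le_div_iff₀ (by positivity) (by positivity)]
      push_cast
      have h4 : (0 : ℝ) ≤ 4 ^ K * (K + 1) * (K - 1) := by
        apply mul_nonneg (by positivity); linarith
      rw [pow_succ]; linarith
    linarith

theorem tendsto_div_of_block_bound {F : ℕ → ℝ} {C : ℝ}
    (hF : ∀ n a b : ℕ, 1 ≤ n → 4 ^ n ≤ a → a ≤ b → b ≤ 4 ^ (n + 1) →
      |F b - F a| ≤ C * ((4 : ℝ) ^ n / n + 1)) :
    Tendsto (fun N => F N / N) atTop (𝓝 0) := by
  have hC : 0 ≤ C := by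
    have := hF 1 4 4 le_rfl (by norm_num) le_rfl (by norm_num)
    norm_num at this; linarith
  set g : ℕ → ℝ := fun K => |F 4| * ((4 : ℝ) ^ K)⁻¹ + C * (K / 4 ^ K) + 2 * C / K
  have hg : Tendsto g atTop (𝓝 0) := by
    have hpow (k : ℕ) := tendsto_pow_const_div_const_pow_of_one_lt k (by norm_num : (1 : ℝ) < 4)
    simpa using (((hpow 0).const_mul |F 4|).add ((hpow 1).const_mul C)).add
      (tendsto_const_div_atTop_nhds_zero_nat (2 * C))
  have hlog : Tendsto (Nat.log 4) atTop atTop :=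
    tendsto_atTop_atTop.2 fun K => ⟨4 ^ K, fun N hN => Nat.le_log_of_pow_le (by norm_num) hN⟩
  refine squeeze_zero_norm' ?_ (hg.comp hlog)
  filter_upwards [eventually_ge_atTop 4] with N hN
  set K := Nat.log 4 N
  have hK : 1 ≤ K := Nat.le_log_of_pow_le (by norm_num) (by simpa using hN)
  have hKN : 4 ^ K ≤ N := Nat.pow_log_le_self 4 (by omega)
  have htel := abs_sub_le_sum_of_block_bound 4 hF hK hKN
    (Nat.lt_pow_succ_log_self (by norm_num) N).le
  rw [← mul_sum, sum_add_distrib] at htel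
  have hsum := sum_Icc_four_pow_div_le K
  have hKN' : (4 : ℝ) ^ K ≤ N := by exact_mod_cast hKN
  have hK' : (0 : ℝ) < K := by exact_mod_cast hK
  have hFN : |F N| ≤ |F 4| + C * (2 * 4 ^ K / K + K) := by
    have := abs_sub_abs_le_abs_sub (F N) (F 4)
    simp only [sum_const, Nat.card_Icc, add_tsub_cancel_right, nsmul_eq_mul, mul_one] at htel
    nlinarith
  show ‖F N / N‖ ≤ g K
  calc ‖F N / N‖ = |F N| / N := by rw [Real.norm_eq_abs, abs_div, Nat.abs_cast]
    _ ≤ (|F 4| + C * (2 * 4 ^ K / K + K)) / 4 ^ K := by gcongr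
    _ = g K := by simp only [g]; field_simp; ring

theorem abs_sum_sub_sum_le_card {ι : Type*} [DecidableEq ι] {s D : Finset ι} {f g : ι → ℝ}
    (hfg : ∀ i ∈ s, |f i - g i| ≤ 1) (hD : ∀ i ∈ s, i ∉ D → f i = g i) :
    |∑ i ∈ s, f i - ∑ i ∈ s, g i| ≤ #D := by
  rw [← sum_sub_distrib, ← sum_subset (inter_subset_left (s₂ := D))
    fun i hi hiD => sub_eq_zero.2 (hD i hi fun h => hiD (mem_inter.2 ⟨hi, h⟩))]
  calc |∑ i ∈ s ∩ D, (f i - g i)| ≤ ∑ i ∈ s ∩ D, |f i - g i| := abs_sum_le_sum_abs _ _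
    _ ≤ #(s ∩ D) := by
      simpa using sum_le_card_nsmul _ _ 1 fun i hi => hfg i (mem_inter.1 hi).1
    _ ≤ #D := by exact_mod_cast card_le_card inter_subset_right

theorem natCast_card_Ico_ceil_lt {P Q : ℝ} (hP : 0 ≤ P) (hPQ : P ≤ Q) :
    (#(Ico ⌈P⌉₊ ⌈Q⌉₊) : ℝ) < Q - P + 1 := by
  rw [Nat.card_Ico, Nat.cast_sub (Nat.ceil_mono hPQ)]
  linarith [Nat.ceil_lt_add_one (hP.trans hPQ), Nat.le_ceil P]

theorem sum_Ioc_neg_one_pow {a b : ℕ} (hab : a ≤ b) :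
    ∑ m ∈ Ioc a b, (-1 : ℝ) ^ m = ((-1) ^ b - (-1) ^ a) / 2 := by
  induction b, hab using Nat.le_induction with
  | base => simp
  | succ b hab ih => rw [sum_Ioc_succ_top hab, ih, pow_succ]; ring

theorem ite_mod_two_eq_zero_sub_half (m : ℕ) :
    ((if m % 2 = 0 then 1 else 0) - 1 / 2 : ℝ) = (-1) ^ m / 2 := by
  rcases Nat.even_or_odd m with h | h
  · norm_num [h.neg_one_pow, Nat.even_iff.1 h]
  · norm_num [h.neg_one_pow, Nat.odd_iff.1 h]

/-- The centred indicator of the even numbers up to `T` and the odd numbers beyond. -/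
noncomputable def signedAlternation (T m : ℕ) : ℝ := (if m ≤ T then 1 else -1) * (-1) ^ m / 2

theorem abs_signedAlternation (T m : ℕ) : |signedAlternation T m| = 1 / 2 := by
  unfold signedAlternation
  split_ifs <;> simp [abs_div]

theorem abs_sum_Ioc_signedAlternation_le (T : ℕ) {a b : ℕ} (hab : a ≤ b) :
    |∑ m ∈ Ioc a b, signedAlternation T m| ≤ 1 := by
  set c := max a (min b T)
  have hac : a ≤ c := le_max_left _ _
  have hcb : c ≤ b := max_le hab (min_le_left _ _)
  have hlow : ∑ m ∈ Ioc a c, signedAlternation T m = (∑ m ∈ Ioc a c, (-1 : ℝ) ^ m) / 2 := by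
    rw [sum_div]
    refine sum_congr rfl fun m hm => ?_
    simp [signedAlternation, show m ≤ T by rw [mem_Ioc] at hm; omega]
  have hhigh : ∑ m ∈ Ioc c b, signedAlternation T m = -((∑ m ∈ Ioc c b, (-1 : ℝ) ^ m) / 2) := by
    rw [sum_div, ← sum_neg_distrib]
    refine sum_congr rfl fun m hm => ?_
    simp [signedAlternation, show ¬ m ≤ T by rw [mem_Ioc] at hm; omega, neg_div]
  rw [← sum_Ioc_consecutive _ hac hcb, hlow, hhigh, sum_Ioc_neg_one_pow hac,
    sum_Ioc_neg_one_pow hcb]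
  have h (k : ℕ) := abs_le.1 (abs_neg_one_pow (α := ℝ) k).le
  rw [abs_le]
  constructor <;> linarith [h a, h b, h c]

theorem four_pow_index_eq {k n m : ℕ} (hk : 4 ^ k ≤ m) (hk' : m < 4 ^ (k + 1)) (hn : 4 ^ n ≤ m)
    (hn' : m < 4 ^ (n + 1)) : k = n :=
  (Nat.log_eq_of_pow_le_of_lt_pow hk hk').symm.trans (Nat.log_eq_of_pow_le_of_lt_pow hn hn')

theorem eq_of_mul_four_pow_le_of_lt {c s u n k : ℕ} (hs : c * 4 ^ n ≤ s) (hs' : s < 2 * c * 4 ^ n)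
    (hu : c * 4 ^ k ≤ u) (hu' : u < 2 * c * 4 ^ k) (hsu : s ≤ u) (hus : u ≤ 2 * s) : n = k := by
  have hc : 0 < c := Nat.pos_of_ne_zero (by rintro rfl; simp at hs')
  have hkn : 4 ^ k < 4 ^ (n + 1) :=
    Nat.lt_of_mul_lt_mul_left (a := c) (by rw [pow_succ]; linarith)
  have hnk : 4 ^ n < 4 ^ (k + 1) :=
    Nat.lt_of_mul_lt_mul_left (a := c) (by rw [pow_succ]; linarith)
  rw [Nat.pow_lt_pow_iff_right (by norm_num)] at hkn hnk
  omega

theorem lt_four_pow_of_four_pow_div_lt {n u d : ℕ} (hn : 1 ≤ n) (hu : u < 4 ^ (n + 1))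
    (hd : (4 : ℝ) ^ n / n < d) : u < 4 ^ d := by
  have hsq : n * n < 4 ^ n := by
    rw [show 4 ^ n = 2 ^ n * 2 ^ n by rw [← mul_pow]; norm_num]
    exact Nat.mul_lt_mul'' n.lt_two_pow_self n.lt_two_pow_self
  have hn' : (0 : ℝ) < n := by exact_mod_cast hn
  have hnd : (n : ℝ) < d := by
    refine lt_of_le_of_lt ?_ hd
    rw [le_div_iff₀ hn']
    exact_mod_cast hsq.le
  have : n + 1 ≤ d := by exact_mod_cast hnd
  exact hu.trans_le (Nat.pow_le_pow_right (by norm_num) this)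

theorem lt_two_mul_four_pow {m n : ℕ} (hn : 1 ≤ n) (hm : (m : ℝ) < (2 - 1 / n) * 4 ^ n) :
    m < 2 * 4 ^ n := by
  have : (0 : ℝ) < 1 / n * 4 ^ n := by positivity
  exact_mod_cast (show (m : ℝ) < 2 * 4 ^ n by linarith)

theorem two_mul_four_pow_lt {m n : ℕ} (hn : 1 ≤ n) (hm : (2 + 1 / n) * 4 ^ n ≤ (m : ℝ)) :
    2 * 4 ^ n < m := by
  have : (0 : ℝ) < 1 / n * 4 ^ n := by positivity
  exact_mod_cast (show (2 * 4 ^ n : ℝ) < m by linarith)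

namespace HalfDensityExample

def A₁ : Set ℕ := {m : ℕ | ∃ n : ℕ, 1 ≤ n ∧ 4 ^ n ≤ m ∧ (m : ℝ) < (2 - 1 / n) * 4 ^ n}

def A₂ : Set ℕ := {m : ℕ | ∃ n : ℕ, 1 ≤ n ∧ (2 + 1 / n) * 4 ^ n ≤ (m : ℝ) ∧ m < 4 ^ (n + 1)}

def A : Set ℕ := (A₁ ∩ {m | m % 2 = 0}) ∪ (A₂ ∩ {m | m % 2 = 1})

theorem lt_four_pow_of_mem_A₁ {s u : ℕ} (hs : s ∈ A₁) (hu : u ∈ A₁) (hsu : s ≤ u)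
    (hus : u ≤ 2 * s) :
    u < 4 ^ (2 * s - u) := by
  obtain ⟨n, hn, hs₁, hs₂⟩ := hs
  obtain ⟨k, hk, hu₁, hu₂⟩ := hu
  have hs₂ := lt_two_mul_four_pow hn hs₂
  have hu₂ := lt_two_mul_four_pow hk hu₂
  obtain rfl : n = k :=
    eq_of_mul_four_pow_le_of_lt (c := 1) (by simpa) (by simpa) (by simpa) (by simpa) hsu hus
  refine lt_four_pow_of_four_pow_div_lt hn ?_ ?_
  · rw [pow_succ]; omega
  · have hs₁ : (4 : ℝ) ^ n ≤ s := by exact_mod_cast hs₁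
    push_cast [Nat.cast_sub hus]
    linarith [show (2 - 1 / n : ℝ) * 4 ^ n = 2 * 4 ^ n - 4 ^ n / n by ring]

theorem lt_four_pow_of_mem_A₂ {s u : ℕ} (hs : s ∈ A₂) (hu : u ∈ A₂) (hsu : s ≤ u)
    (hus : u ≤ 2 * s) :
    u < 4 ^ (2 * s - u) := by
  obtain ⟨n, hn, hs₁, hs₂⟩ := hs
  obtain ⟨k, hk, hu₁, hu₂⟩ := hu
  obtain rfl : n = k := eq_of_mul_four_pow_le_of_lt (c := 2) (two_mul_four_pow_lt hn hs₁).le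
    (by rw [pow_succ] at hs₂; omega) (two_mul_four_pow_lt hk hu₁).le
    (by rw [pow_succ] at hu₂; omega) hsu hus
  refine lt_four_pow_of_four_pow_div_lt hn hu₂ ?_
  have hu₂ : (u : ℝ) < 4 * 4 ^ n := by rw [← pow_succ']; exact_mod_cast hu₂
  have : (0 : ℝ) ≤ 4 ^ n / n := by positivity
  push_cast [Nat.cast_sub hus]
  linarith [show (2 + 1 / n : ℝ) * 4 ^ n = 2 * 4 ^ n + 4 ^ n / n by ring]

theorem lt_four_pow_of_mem_A {s u : ℕ} (hs : s ∈ A) (hu : u ∈ A) (hsu_mod : s % 2 = u % 2)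
    (hsu : s ≤ u) (hus : u ≤ 2 * s) : u < 4 ^ (2 * s - u) := by
  rcases hs with ⟨hs, hs_mod : s % 2 = 0⟩ | ⟨hs, hs_mod : s % 2 = 1⟩ <;>
    rcases hu with ⟨hu, hu_mod : u % 2 = 0⟩ | ⟨hu, hu_mod : u % 2 = 1⟩
  · exact lt_four_pow_of_mem_A₁ hs hu hsu hus
  · omega
  · omega
  · exact lt_four_pow_of_mem_A₂ hs hu hsu hus

theorem not_forall_add_add_mem_A {B : Set ℕ} (hB : B.Infinite) (t : ℕ) :
    ¬ ∀ b₁ ∈ B, ∀ b₂ ∈ B, b₁ + b₂ + t ∈ A := by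
  intro hBA
  obtain ⟨r, hr⟩ : ∃ r, (B ∩ {m | m % 2 = r}).Infinite := by
    by_contra! h
    refine hB (((h 0).union (h 1)).subset fun m hm => ?_)
    have := Nat.mod_two_eq_zero_or_one m
    aesop
  obtain ⟨b, hb, hb_mod : b % 2 = r⟩ := hr.nonempty
  obtain ⟨b', ⟨hb', hb'_mod : b' % 2 = r⟩, hbb'⟩ := hr.exists_gt (max b (4 ^ (2 * b + t)))
  rw [max_lt_iff] at hbb'
  have := lt_four_pow_of_mem_A (hBA b hb b' hb') (hBA b' hb' b' hb') (by omega) (by omega)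
    (by omega)
  rw [show 2 * (b + b' + t) - (b' + b' + t) = 2 * b + t by omega] at this
  omega

theorem mem_A₁_iff {n m : ℕ} (hn : 1 ≤ n) (hm : 4 ^ n ≤ m) (hm' : m < 4 ^ (n + 1)) :
    m ∈ A₁ ↔ (m : ℝ) < (2 - 1 / n) * 4 ^ n := by
  refine ⟨fun ⟨k, hk, hk₁, hk₂⟩ => ?_, fun h => ⟨n, hn, hm, h⟩⟩
  obtain rfl : k = n := four_pow_index_eq hk₁
    (by have := lt_two_mul_four_pow hk hk₂; rw [pow_succ]; omega) hm hm'
  exact hk₂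

theorem mem_A₂_iff {n m : ℕ} (hn : 1 ≤ n) (hm : 4 ^ n ≤ m) (hm' : m < 4 ^ (n + 1)) :
    m ∈ A₂ ↔ (2 + 1 / n) * 4 ^ n ≤ (m : ℝ) := by
  refine ⟨fun ⟨k, hk, hk₁, hk₂⟩ => ?_, fun h => ⟨n, hn, h, hm'⟩⟩
  obtain rfl : k = n := four_pow_index_eq
    (by have := two_mul_four_pow_lt hk hk₁; omega) hk₂ hm hm'
  exact hk₁

theorem mem_A_iff {n m : ℕ} (hn : 1 ≤ n) (hm : 4 ^ n ≤ m) (hm' : m < 4 ^ (n + 1)) :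
    m ∈ A ↔ (m % 2 = 0 ∧ (m : ℝ) < (2 - 1 / n) * 4 ^ n) ∨
      (m % 2 = 1 ∧ (2 + 1 / n) * 4 ^ n ≤ (m : ℝ)) := by
  rw [A, Set.mem_union, Set.mem_inter_iff, Set.mem_inter_iff, mem_A₁_iff hn hm hm',
    mem_A₂_iff hn hm hm']
  exact or_congr and_comm and_comm

theorem ite_mem_A_sub_half {n m : ℕ} (hn : 1 ≤ n) (hm : 4 ^ n ≤ m) (hm' : m < 4 ^ (n + 1))
    (hmP : m ∉ Ico ⌈(2 - 1 / n : ℝ) * 4 ^ n⌉₊ ⌈(2 + 1 / n : ℝ) * 4 ^ n⌉₊) :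
    (if m ∈ A then 1 else 0) - 1 / 2 = signedAlternation (2 * 4 ^ n) m := by
  rw [mem_Ico, not_and_or, not_le, not_lt, Nat.lt_ceil, Nat.ceil_le] at hmP
  have hPQ : (2 - 1 / n : ℝ) * 4 ^ n < (2 + 1 / n) * 4 ^ n := by
    gcongr
    linarith [show (0 : ℝ) < 1 / n by positivity]
  rw [mem_A_iff hn hm hm', signedAlternation]
  rcases hmP with hP | hQ
  · have hT := lt_two_mul_four_pow hn hP
    rw [if_pos hT.le, one_mul, ← ite_mod_two_eq_zero_sub_half]
    simp only [hP, and_true, not_le.2 (hP.trans hPQ), and_false, or_false]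
  · have hT := two_mul_four_pow_lt hn hQ
    rw [if_neg (not_le.2 hT), neg_one_mul, neg_div, ← ite_mod_two_eq_zero_sub_half]
    simp only [hQ, and_true, not_lt.2 (hPQ.le.trans hQ), and_false, false_or]
    rcases Nat.mod_two_eq_zero_or_one m with h | h <;> norm_num [h]

theorem abs_sub_le_of_block {n a b : ℕ} (hn : 1 ≤ n) (ha : 4 ^ n ≤ a) (hab : a ≤ b)
    (hb : b ≤ 4 ^ (n + 1)) :
    |((countIn A b : ℝ) - b / 2) - ((countIn A a : ℝ) - a / 2)| ≤ 3 * ((4 : ℝ) ^ n / n + 1) := by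
  set P : ℝ := (2 - 1 / n) * 4 ^ n
  set Q : ℝ := (2 + 1 / n) * 4 ^ n
  rw [countIn_sub_half_eq_sum, countIn_sub_half_eq_sum,
    ← sum_Ioc_consecutive _ (Nat.zero_le a) hab, add_sub_cancel_left]
  have hexc := abs_sum_sub_sum_le_card (s := Ioc a b) (D := insert (4 ^ (n + 1)) (Ico ⌈P⌉₊ ⌈Q⌉₊))
    (f := fun m => (if m ∈ A then 1 else 0) - 1 / 2) (g := signedAlternation (2 * 4 ^ n))
    (fun m _ => by
      refine (abs_sub _ _).trans ?_
      rw [abs_signedAlternation]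
      split_ifs <;> norm_num)
    (fun m hm hmD => by
      rw [mem_insert, not_or] at hmD
      rw [mem_Ioc] at hm
      exact ite_mem_A_sub_half hn (by omega) (by omega) hmD.2)
  have hcard : (#(insert (4 ^ (n + 1)) (Ico ⌈P⌉₊ ⌈Q⌉₊)) : ℝ) ≤ #(Ico ⌈P⌉₊ ⌈Q⌉₊) + 1 := by
    exact_mod_cast card_insert_le _ _
  have hP : 0 ≤ P := by
    have : (1 : ℝ) / n ≤ 1 := by rw [div_le_one (by positivity)]; exact_mod_cast hn
    exact mul_nonneg (by linarith) (by positivity)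
  have hQP : Q - P = 2 * (4 ^ n / n) := by ring
  have hIco := natCast_card_Ico_ceil_lt (Q := Q) hP
    (by linarith [show (0 : ℝ) ≤ 4 ^ n / n by positivity])
  have halt := abs_sum_Ioc_signedAlternation_le (2 * 4 ^ n) hab
  have htri := abs_add_le (∑ m ∈ Ioc a b, ((if m ∈ A then 1 else 0) - 1 / 2) -
    ∑ m ∈ Ioc a b, signedAlternation (2 * 4 ^ n) m) (∑ m ∈ Ioc a b, signedAlternation (2 * 4 ^ n) m)
  rw [sub_add_cancel] at htri
  linarith [show (0 : ℝ) ≤ 4 ^ n / n by positivity]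

theorem hasDensity_A : hasDensity A (1 / 2) := by
  have h := (tendsto_div_of_block_bound (F := fun N => (countIn A N : ℝ) - N / 2) (C := 3)
    fun _ _ _ hn ha hab hb => abs_sub_le_of_block hn ha hab hb).add_const (1 / 2)
  rw [zero_add] at h
  refine h.congr' ?_
  filter_upwards [eventually_ne_atTop 0] with N hN
  field_simp
  ring

end HalfDensityExample

theorem example_half_no_BBt :
    hasDensity (({m : ℕ | ∃ n : ℕ, 1 ≤ n ∧ 4 ^ n ≤ m ∧ (m : ℝ) < (2 - 1 / n) * 4 ^ n}
          ∩ {m : ℕ | m % 2 = 0})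
        ∪ ({m : ℕ | ∃ n : ℕ, 1 ≤ n ∧ (2 + 1 / n) * 4 ^ n ≤ (m : ℝ) ∧ m < 4 ^ (n + 1)}
          ∩ {m : ℕ | m % 2 = 1})) (1 / 2) ∧
    ∀ (B : Set ℕ) (t : ℕ), B.Infinite →
      ¬ (∀ b₁ ∈ B, ∀ b₂ ∈ B,
          b₁ + b₂ + t ∈
            ({m : ℕ | ∃ n : ℕ, 1 ≤ n ∧ 4 ^ n ≤ m ∧ (m : ℝ) < (2 - 1 / n) * 4 ^ n}
                ∩ {m : ℕ | m % 2 = 0})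
              ∪ ({m : ℕ | ∃ n : ℕ, 1 ≤ n ∧ (2 + 1 / n) * 4 ^ n ≤ (m : ℝ) ∧ m < 4 ^ (n + 1)}
                ∩ {m : ℕ | m % 2 = 1})) :=
  ⟨HalfDensityExample.hasDensity_A, fun _ t hB => HalfDensityExample.not_forall_add_add_mem_A hB t⟩
end

section
/- Let A₁ = ℕ ∩ ⋃_{n∈ℕ} [4^n, (2 - 1/n)·4^n), A₂ = ℕ ∩ ⋃_{n∈ℕ} [(2 + 1/n)·4^n, 4^{n+1}), and A' = (A₁ \ 4ℕ) ∪ (A₂ \ (4ℕ+2)). Then the natural density of A' equals 3/4 and there is no infinite set B ⊆ ℕ with B + B ⊆ A'. -/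
open Filter
open scoped Classical

/-!
`A' ⊆ pattern ⊆ A' ∪ gaps`. Here `pattern` omits exactly one residue from every aligned block
`{4q, …, 4q + 3}` (`0` in the lower half `[4ⁿ, 2·4ⁿ)` of a 4-adic block `[4ⁿ, 4ⁿ⁺¹)`, `2` in the
upper half), so it has density `3/4`; the gaps `[(2 - 1/n)·4ⁿ, (2 + 1/n)·4ⁿ)` meet `[1, 4ᴹ]` in
`O(4ᴹ/M)` points, so they have density `0`.

If `B` is infinite, infinitely many of its elements share a residue mod 4; fix one, `b`, and take
`b'` much larger. Then `b' + b'` and `b + b'` have the same residue, `2` or `0`, so both must lie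
in `A₁` or both in `A₂`. But with `b' + b'` in block `n` and `b < 4ⁿ/(2n)`, the sum `b + b'` falls
into the upper half of block `n - 1` in the first case and below `(2 + 1/n)·4ⁿ` in the second.
-/

open Finset

lemma countIn_mono {A B : Set ℕ} (h : A ⊆ B) (N : ℕ) : countIn A N ≤ countIn B N :=
  card_le_card (monotone_filter_right _ fun _ _ hm => h hm)

lemma countIn_union_le (A B : Set ℕ) (N : ℕ) : countIn (A ∪ B) N ≤ countIn A N + countIn B N := by
  unfold countIn
  rw [← card_union_add_card_inter]
  exact le_add_right (card_le_card fun m hm => by simpa [or_and_right, and_or_left] using hm)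

lemma hasDensity_of_abs_sub_le {A : Set ℕ} {d : ℝ} (e : ℕ → ℝ)
    (he : Tendsto (fun N => e N / N) atTop (nhds 0))
    (h : ∀ᶠ N in atTop, |(countIn A N : ℝ) - d * N| ≤ e N) : hasDensity A d := by
  rw [hasDensity, ← tendsto_sub_nhds_zero_iff]
  refine squeeze_zero_norm' ?_ he
  filter_upwards [h, eventually_gt_atTop 0] with N hN hN0
  have hN0' : (0 : ℝ) < N := by exact_mod_cast hN0
  rw [Real.norm_eq_abs, div_sub' hN0'.ne', abs_div, abs_of_pos hN0', mul_comm]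
  exact div_le_div_of_nonneg_right hN hN0'.le

lemma hasDensity_of_subset_of_subset_union {A T G : Set ℕ} {d : ℝ} (hAT : A ⊆ T)
    (hTAG : T ⊆ A ∪ G) (hT : hasDensity T d) (hG : hasDensity G 0) : hasDensity A d := by
  have hlower : Tendsto (fun N => ((countIn T N : ℝ) - countIn G N) / N) atTop (nhds d) := by
    simpa [sub_div] using hT.sub hG
  refine tendsto_of_tendsto_of_tendsto_of_le_of_le hlower hT (fun N => ?_) (fun N => ?_)
  · have hTN : (countIn T N : ℝ) ≤ countIn A N + countIn G N := by
      exact_mod_cast (countIn_mono hTAG N).trans (countIn_union_le A G N)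
    gcongr
    linarith
  · gcongr
    exact_mod_cast countIn_mono hAT N

lemma card_filter_range_mul_mod_ne {k : ℕ} {g : ℕ → ℕ} (hg : ∀ q, g q < k) (Q : ℕ) :
    #((range (k * Q)).filter (fun m => m % k ≠ g (m / k))) = (k - 1) * Q := by
  induction Q with
  | zero => simp
  | succ Q ih =>
    have hdigits : ∀ i < k, (k * Q + i) % k = i ∧ (k * Q + i) / k = Q := fun i hi =>
      ⟨by simp [Nat.mod_eq_of_lt hi], by rw [Nat.mul_add_div (by omega), Nat.div_eq_of_lt hi, add_zero]⟩
    have hblock : ((range k).map (addLeftEmbedding (k * Q))).filter (fun m => m % k ≠ g (m / k))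
        = ((range k).erase (g Q)).map (addLeftEmbedding (k * Q)) := by
      ext m
      simp only [mem_filter, Finset.mem_map, mem_erase, mem_range, addLeftEmbedding_apply]
      constructor
      · rintro ⟨⟨i, hi, rfl⟩, hne⟩
        refine ⟨i, ⟨?_, hi⟩, rfl⟩
        rwa [(hdigits i hi).1, (hdigits i hi).2] at hne
      · rintro ⟨i, ⟨hne, hi⟩, rfl⟩
        refine ⟨⟨i, hi, rfl⟩, ?_⟩
        rwa [(hdigits i hi).1, (hdigits i hi).2]
    rw [mul_add_one, range_add_eq_union, filter_union, card_union_of_disjoint, ih, hblock,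
      card_map, card_erase_of_mem (mem_range.2 (hg Q)), card_range, mul_add_one]
    exact disjoint_filter_filter (disjoint_range_addLeftEmbedding _ _)

lemma countIn_le_card_filter_range (A : Set ℕ) (N : ℕ) :
    countIn A N ≤ #((range (N + 1)).filter (· ∈ A)) :=
  card_le_card (filter_subset_filter _ fun m hm => by simp only [mem_Icc, mem_range] at hm ⊢; omega)

lemma card_filter_range_le_countIn (A : Set ℕ) (N : ℕ) :
    #((range (N + 1)).filter (· ∈ A)) ≤ countIn A N + 1 := by
  refine (card_le_card fun m hm => ?_).trans (card_insert_le 0 _)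
  simp only [mem_filter, mem_range, mem_insert, mem_Icc] at hm ⊢
  rcases m with _ | m
  · exact Or.inl rfl
  · exact Or.inr ⟨⟨by omega, by omega⟩, hm.2⟩

lemma hasDensity_of_card_filter_range_mul {A : Set ℕ} {k j : ℕ} (hk : 0 < k)
    (hcount : ∀ Q, #((range (k * Q)).filter (· ∈ A)) = j * Q) : hasDensity A (j / k) := by
  have hmono : ∀ {a b}, a ≤ b → #((range a).filter (· ∈ A)) ≤ #((range b).filter (· ∈ A)) :=
    fun hab => card_le_card (filter_subset_filter _ (range_subset_range.2 hab))
  refine hasDensity_of_abs_sub_le (fun _ => 2 * j + 1) (tendsto_const_div_atTop_nhds_zero_nat _)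
    (Eventually.of_forall fun N => ?_)
  set q := (N + 1) / k
  have hq1 : k * q ≤ N + 1 := Nat.mul_div_le _ _
  have hq2 : N + 1 ≤ k * (q + 1) := (Nat.lt_mul_div_succ _ hk).le
  have hlo : j * q ≤ countIn A N + 1 :=
    hcount q ▸ (hmono hq1).trans (card_filter_range_le_countIn A N)
  have hhi : countIn A N ≤ j * q + j :=
    mul_add_one j q ▸ hcount (q + 1) ▸ (countIn_le_card_filter_range A N).trans (hmono hq2)
  have hloR : (j : ℝ) * q ≤ countIn A N + 1 := by exact_mod_cast hlo
  have hhiR : (countIn A N : ℝ) ≤ j * q + j := by exact_mod_cast hhi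
  have hq1R : (k : ℝ) * q ≤ N + 1 := by exact_mod_cast hq1
  have hq2R : (N : ℝ) + 1 ≤ k * (q + 1) := by exact_mod_cast hq2
  have hkR : (1 : ℝ) ≤ k := by exact_mod_cast hk
  have hd : (j : ℝ) / k * N - j * q = (j : ℝ) / k * (N - k * q) := by field_simp
  have hd0 : 0 ≤ (j : ℝ) / k := by positivity
  have hd1 : (j : ℝ) / k ≤ j := div_le_self (Nat.cast_nonneg j) hkR
  have hshift_hi : (j : ℝ) / k * (N - k * q) ≤ j :=
    calc (j : ℝ) / k * (N - k * q) ≤ j / k * k := by gcongr; linarith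
      _ = j := div_mul_cancel₀ _ (by linarith)
  have hshift_lo : -((j : ℝ) / k) ≤ j / k * (N - k * q) := by nlinarith
  rw [abs_le]
  constructor <;> linarith

lemma hasDensity_mod_ne {k : ℕ} {g : ℕ → ℕ} (hk : 0 < k) (hg : ∀ q, g q < k) :
    hasDensity {m | m % k ≠ g (m / k)} ((k - 1 : ℕ) / k) :=
  hasDensity_of_card_filter_range_mul hk fun Q => by
    convert card_filter_range_mul_mod_ne hg Q using 2
    ext; simp

namespace ThreeQuarters

def A₁ : Set ℕ := {m : ℕ | ∃ n : ℕ, 1 ≤ n ∧ 4 ^ n ≤ m ∧ (m : ℝ) < (2 - 1 / n) * 4 ^ n}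

def A₂ : Set ℕ := {m : ℕ | ∃ n : ℕ, 1 ≤ n ∧ (2 + 1 / n) * 4 ^ n ≤ (m : ℝ) ∧ m < 4 ^ (n + 1)}

def A' : Set ℕ := (A₁ \ {m | m % 4 = 0}) ∪ (A₂ \ {m | m % 4 = 2})

lemma lt_two_mul_four_pow {m n : ℕ} (h : (m : ℝ) < (2 - 1 / n) * 4 ^ n) : m < 2 * 4 ^ n := by
  have : (m : ℝ) < 2 * 4 ^ n := h.trans_le (by gcongr; exact sub_le_self _ (by positivity))
  exact_mod_cast this

lemma two_mul_four_pow_le {m n : ℕ} (h : (2 + 1 / n) * 4 ^ n ≤ (m : ℝ)) : 2 * 4 ^ n ≤ m := by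
  have : 2 * 4 ^ n ≤ (m : ℝ) := le_trans (by gcongr; exact le_add_of_nonneg_right (by positivity)) h
  exact_mod_cast this

lemma four_le_of_one_le_log {m : ℕ} (h : 1 ≤ Nat.log 4 m) : 4 ≤ m := by
  simpa using Nat.pow_le_of_le_log (by rintro rfl; simp at h) h

lemma mem_A₁_iff {m : ℕ} :
    m ∈ A₁ ↔ 1 ≤ Nat.log 4 m ∧ (m : ℝ) < (2 - 1 / Nat.log 4 m) * 4 ^ Nat.log 4 m := by
  constructor
  · rintro ⟨n, hn, hlo, hhi⟩
    have hlog : Nat.log 4 m = n :=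
      Nat.log_eq_of_pow_le_of_lt_pow hlo (by have := lt_two_mul_four_pow hhi; rw [pow_succ]; omega)
    exact hlog ▸ ⟨hn, hhi⟩
  · rintro ⟨hn, hhi⟩
    exact ⟨_, hn, Nat.pow_log_le_self 4 (by have := four_le_of_one_le_log hn; omega), hhi⟩

lemma mem_A₂_iff {m : ℕ} :
    m ∈ A₂ ↔ 1 ≤ Nat.log 4 m ∧ (2 + 1 / Nat.log 4 m) * 4 ^ Nat.log 4 m ≤ (m : ℝ) := by
  constructor
  · rintro ⟨n, hn, hlo, hhi⟩
    have hlog : Nat.log 4 m = n :=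
      Nat.log_eq_of_pow_le_of_lt_pow (by have := two_mul_four_pow_le hlo; omega) hhi
    exact hlog ▸ ⟨hn, hlo⟩
  · rintro ⟨hn, hlo⟩
    exact ⟨_, hn, hlo, Nat.lt_pow_succ_log_self (by norm_num) m⟩

-- Evaluated at `m / 4`: which half of its block `m ≥ 4` lies in depends only on `m / 4`,
-- since `4ⁿ` and `2·4ⁿ` are multiples of `4`.
def forbiddenResidue (q : ℕ) : ℕ := if q < 2 * 4 ^ Nat.log 4 q then 0 else 2

def pattern : Set ℕ := {m | m % 4 ≠ forbiddenResidue (m / 4)}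

def gaps : Set ℕ :=
  {m | m < 4} ∪ {m | ∃ n : ℕ, 1 ≤ n ∧ (2 - 1 / n) * 4 ^ n ≤ (m : ℝ) ∧ (m : ℝ) < (2 + 1 / n) * 4 ^ n}

lemma forbiddenResidue_div_four {m : ℕ} (hm : 1 ≤ Nat.log 4 m) :
    forbiddenResidue (m / 4) = if m < 2 * 4 ^ Nat.log 4 m then 0 else 2 := by
  have h4 : 4 ^ Nat.log 4 m = 4 ^ Nat.log 4 (m / 4) * 4 := by
    rw [Nat.log_div_base, ← pow_succ, Nat.sub_add_cancel hm]
  rw [forbiddenResidue, h4, ← mul_assoc]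
  simp only [Nat.div_lt_iff_lt_mul (show 0 < 4 by norm_num)]

lemma A'_subset_pattern : A' ⊆ pattern := by
  rintro m (⟨hm, hm0⟩ | ⟨hm, hm2⟩) <;> simp only [pattern, Set.mem_ofPred_eq]
  · obtain ⟨hn, hlt⟩ := mem_A₁_iff.1 hm
    rwa [forbiddenResidue_div_four hn, if_pos (lt_two_mul_four_pow hlt)]
  · obtain ⟨hn, hle⟩ := mem_A₂_iff.1 hm
    rwa [forbiddenResidue_div_four hn, if_neg (not_lt.2 (two_mul_four_pow_le hle))]

lemma pattern_subset_A'_union_gaps : pattern ⊆ A' ∪ gaps := by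
  intro m hm
  by_cases h4 : m < 4
  · exact Or.inr (Or.inl h4)
  have hn : 1 ≤ Nat.log 4 m := Nat.le_log_of_pow_le (by norm_num) (by omega)
  simp only [pattern, Set.mem_ofPred_eq, forbiddenResidue_div_four hn] at hm
  by_cases hlo : (m : ℝ) < (2 - 1 / Nat.log 4 m) * 4 ^ Nat.log 4 m
  · rw [if_pos (lt_two_mul_four_pow hlo)] at hm
    exact Or.inl (Or.inl ⟨mem_A₁_iff.2 ⟨hn, hlo⟩, hm⟩)
  by_cases hhi : (2 + 1 / Nat.log 4 m) * 4 ^ Nat.log 4 m ≤ (m : ℝ)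
  · rw [if_neg (not_lt.2 (two_mul_four_pow_le hhi))] at hm
    exact Or.inl (Or.inr ⟨mem_A₂_iff.2 ⟨hn, hhi⟩, hm⟩)
  exact Or.inr (Or.inr ⟨_, hn, not_lt.1 hlo, not_le.1 hhi⟩)

lemma hasDensity_pattern : hasDensity pattern (3 / 4) := by
  simpa [pattern] using hasDensity_mod_ne (k := 4) (g := forbiddenResidue) (by norm_num)
    fun q => by unfold forbiddenResidue; split_ifs <;> norm_num


lemma card_Ico_ceil_le {a b : ℝ} (hab : a ≤ b) (hb : 0 ≤ b) :
    (#(Ico ⌈a⌉₊ ⌈b⌉₊) : ℝ) ≤ b - a + 1 := by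
  rw [Nat.card_Ico, Nat.cast_sub (Nat.ceil_mono hab)]
  linarith [Nat.le_ceil a, Nat.ceil_lt_add_one hb]

lemma sum_Icc_four_pow_div_le (M : ℕ) : ∑ n ∈ Icc 1 M, (4 : ℝ) ^ n / n ≤ 2 * (4 ^ M / M) := by
  induction M with
  | zero => simp
  | succ M ih =>
    rw [sum_Icc_succ_top (by omega)]
    rcases Nat.eq_zero_or_pos M with rfl | hM
    · norm_num
    have hMR : (1 : ℝ) ≤ M := by exact_mod_cast hM
    have hstep : 2 * ((4 : ℝ) ^ M / M) ≤ 4 ^ (M + 1) / (M + 1 : ℕ) := by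
      rw [← mul_div_assoc, div_le_div_iff₀ (by positivity) (by positivity), pow_succ]
      push_cast
      nlinarith [pow_pos (show (0 : ℝ) < 4 by norm_num) M]
    linarith

noncomputable def gapInterval (n : ℕ) : Finset ℕ := Ico ⌈(2 - 1 / n : ℝ) * 4 ^ n⌉₊ ⌈(2 + 1 / n : ℝ) * 4 ^ n⌉₊

lemma card_gapInterval_le {n : ℕ} (hn : 1 ≤ n) : (#(gapInterval n) : ℝ) ≤ 3 * (4 ^ n / n) := by
  have hn1 : (1 : ℝ) ≤ n := by exact_mod_cast hn
  have hpow : (n : ℝ) ≤ 4 ^ n := by exact_mod_cast (Nat.lt_pow_self (by norm_num)).le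
  have hone : (1 : ℝ) ≤ 4 ^ n / n := (one_le_div (by linarith)).2 hpow
  have hinv : (0 : ℝ) ≤ 1 / n := by positivity
  calc (#(gapInterval n) : ℝ) ≤ (2 + 1 / n) * 4 ^ n - (2 - 1 / n) * 4 ^ n + 1 :=
        card_Ico_ceil_le (by gcongr; linarith) (by positivity)
    _ = 2 * (4 ^ n / n) + 1 := by ring
    _ ≤ 3 * (4 ^ n / n) := by linarith

lemma filter_Icc_gaps_subset (N : ℕ) :
    (Icc 1 N).filter (· ∈ gaps) ⊆ Icc 1 3 ∪ (Icc 1 (Nat.log 4 N)).biUnion gapInterval := by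
  intro m hm
  simp only [mem_filter, mem_Icc] at hm
  obtain ⟨⟨hm1, hmN⟩, hsmall | ⟨n, hn, hlo, hhi⟩⟩ := hm
  · exact mem_union_left _ (mem_Icc.2 ⟨hm1, by simp at hsmall; omega⟩)
  refine mem_union_right _ (mem_biUnion.2 ⟨n, mem_Icc.2 ⟨hn, ?_⟩, ?_⟩)
  · have h1n : (1 : ℝ) / n ≤ 1 := div_le_one_of_le₀ (by exact_mod_cast hn) (Nat.cast_nonneg n)
    have : ((4 ^ n : ℕ) : ℝ) ≤ N := by
      push_cast
      nlinarith [pow_pos (show (0 : ℝ) < 4 by norm_num) n, (Nat.cast_le (α := ℝ)).2 hmN]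
    exact Nat.le_log_of_pow_le (by norm_num) (by exact_mod_cast this)
  · exact mem_Ico.2 ⟨Nat.ceil_le.2 hlo, Nat.lt_ceil.2 hhi⟩

lemma countIn_gaps_le (N : ℕ) : (countIn gaps N : ℝ) ≤ 3 + 6 * (N / Nat.log 4 N) := by
  set M := Nat.log 4 N
  have hpowN : (4 : ℝ) ^ M / M ≤ N / M := by
    rcases Nat.eq_zero_or_pos N with rfl | hN
    · simp [M]
    · gcongr
      exact_mod_cast Nat.pow_log_le_self 4 hN.ne'
  calc (countIn gaps N : ℝ) ≤ #(Icc 1 3 ∪ (Icc 1 M).biUnion gapInterval) := by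
        exact_mod_cast card_le_card (filter_Icc_gaps_subset N)
    _ ≤ 3 + ∑ n ∈ Icc 1 M, (#(gapInterval n) : ℝ) := by
        exact_mod_cast (card_union_le _ _).trans (add_le_add (by simp) card_biUnion_le)
    _ ≤ 3 + ∑ n ∈ Icc 1 M, 3 * ((4 : ℝ) ^ n / n) := by
        gcongr with n hn
        exact card_gapInterval_le (mem_Icc.1 hn).1
    _ ≤ 3 + 6 * (N / M) := by
        rw [← mul_sum]
        linarith [sum_Icc_four_pow_div_le M]

lemma hasDensity_gaps : hasDensity gaps 0 := by
  have hlog : Tendsto (fun N => Nat.log 4 N) atTop atTop :=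
    tendsto_atTop_atTop.2 fun b => ⟨4 ^ b, fun N hN => Nat.le_log_of_pow_le (by norm_num) hN⟩
  have he : Tendsto (fun N : ℕ => (3 + 6 * (N / Nat.log 4 N) : ℝ) / N) atTop (nhds 0) := by
    have := (tendsto_const_div_atTop_nhds_zero_nat (3 : ℝ)).add
      ((tendsto_const_div_atTop_nhds_zero_nat (6 : ℝ)).comp hlog)
    rw [add_zero] at this
    refine this.congr' ?_
    filter_upwards [eventually_gt_atTop 0] with N hN
    have : (N : ℝ) ≠ 0 := by exact_mod_cast hN.ne'
    simp only [Function.comp_apply]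
    field_simp
  refine hasDensity_of_abs_sub_le _ he (Eventually.of_forall fun N => ?_)
  rw [zero_mul, sub_zero, abs_of_nonneg (Nat.cast_nonneg _)]
  exact countIn_gaps_le N

lemma hasDensity_A' : hasDensity A' (3 / 4) :=
  hasDensity_of_subset_of_subset_union A'_subset_pattern pattern_subset_A'_union_gaps
    hasDensity_pattern hasDensity_gaps


lemma two_mul_mul_lt_four_pow {b n : ℕ} (hn : 2 * b + 1 ≤ n) : 2 * b * n < 4 ^ n :=
  calc 2 * b * n ≤ n * n := Nat.mul_le_mul_right _ (by omega)
    _ < 2 ^ n * 2 ^ n := Nat.mul_self_lt_mul_self Nat.lt_two_pow_self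
    _ = 4 ^ n := by rw [← mul_pow]; norm_num

lemma add_notMem_A₁ {b b' : ℕ} (h : b' + b' ∈ A₁)
    (hb : 2 * b * Nat.log 4 (b' + b') ≤ 4 ^ Nat.log 4 (b' + b')) : b + b' ∉ A₁ := by
  obtain ⟨hn, hlt⟩ := mem_A₁_iff.1 h
  set n := Nat.log 4 (b' + b')
  have hnR : (1 : ℝ) ≤ n := by exact_mod_cast hn
  have hbR : 2 * (b : ℝ) * n ≤ 4 ^ n := by exact_mod_cast hb
  have hsum : b + b' < 4 ^ n := by
    have : 2 * (b : ℝ) ≤ 4 ^ n / n := (le_div_iff₀ (by linarith)).2 hbR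
    have : ((b + b' : ℕ) : ℝ) < 4 ^ n := by
      push_cast at hlt ⊢
      linarith [show (2 - 1 / (n : ℝ)) * 4 ^ n = 2 * 4 ^ n - 4 ^ n / n by ring]
    exact_mod_cast this
  have hpow : 4 ^ n ≤ b' + b' := Nat.pow_log_le_self 4 (by have := four_le_of_one_le_log hn; omega)
  intro hmem
  obtain ⟨hL, hLlt⟩ := mem_A₁_iff.1 hmem
  have hLn : Nat.log 4 (b + b') + 1 ≤ n := (Nat.pow_lt_pow_iff_right (by norm_num)).1
    ((Nat.pow_log_le_self 4 (by have := four_le_of_one_le_log hL; omega)).trans_lt hsum)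
  have hpowL := Nat.pow_le_pow_right (show 0 < 4 by norm_num) hLn
  have := lt_two_mul_four_pow hLlt
  rw [pow_succ] at hpowL
  omega

lemma add_notMem_A₂ {b b' : ℕ} (h : b' + b' ∈ A₂)
    (hb : b * Nat.log 4 (b' + b') < 4 ^ Nat.log 4 (b' + b')) : b + b' ∉ A₂ := by
  obtain ⟨hn, hle⟩ := mem_A₂_iff.1 h
  set n := Nat.log 4 (b' + b')
  have hnR : (1 : ℝ) ≤ n := by exact_mod_cast hn
  have hbR : (b : ℝ) * n < 4 ^ n := by exact_mod_cast hb
  have hb'lt : b' + b' < 4 ^ (n + 1) := Nat.lt_pow_succ_log_self (by norm_num) _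
  have hsumR : ((b + b' : ℕ) : ℝ) < (2 + 1 / n) * 4 ^ n := by
    have hb' : (b' : ℝ) < 2 * 4 ^ n := by
      have : b' < 2 * 4 ^ n := by rw [pow_succ] at hb'lt; omega
      exact_mod_cast this
    have : (b : ℝ) < 4 ^ n / n := (lt_div_iff₀ (by linarith)).2 hbR
    push_cast
    linarith [show (2 + 1 / (n : ℝ)) * 4 ^ n = 2 * 4 ^ n + 4 ^ n / n by ring]
  have hlog : Nat.log 4 (b + b') = n := by
    refine Nat.log_eq_of_pow_le_of_lt_pow (by have := two_mul_four_pow_le hle; omega) ?_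
    have : b * 1 ≤ b * n := Nat.mul_le_mul_left _ hn
    rw [pow_succ]
    omega
  intro hmem
  obtain ⟨-, hLle⟩ := mem_A₂_iff.1 hmem
  rw [hlog] at hLle
  exact absurd hsumR (not_lt.2 hLle)

theorem not_forall_add_mem_A' {B : Set ℕ} (hB : B.Infinite) :
    ¬ ∀ b₁ ∈ B, ∀ b₂ ∈ B, b₁ + b₂ ∈ A' := by
  intro hBB
  obtain ⟨r, hr⟩ : ∃ r : Fin 4, {b ∈ B | b % 4 = r}.Infinite := by
    by_contra! hfin
    refine hB ((Set.finite_iUnion hfin).subset fun b hb => Set.mem_iUnion.2 ?_)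
    exact ⟨⟨b % 4, Nat.mod_lt _ (by norm_num)⟩, hb, rfl⟩
  obtain ⟨b, hbB, hbr⟩ := hr.nonempty
  obtain ⟨b', ⟨hb'B, hb'r⟩, hbig⟩ := hr.exists_gt (4 ^ (2 * b + 1))
  have hsmall : 2 * b * Nat.log 4 (b' + b') < 4 ^ Nat.log 4 (b' + b') :=
    two_mul_mul_lt_four_pow (Nat.le_log_of_pow_le (by norm_num) (by omega))
  -- `b + b'` and `b' + b'` share their residue `0` or `2`, so they lie in the same `Aᵢ`.
  have hmod : (b + b') % 4 = (b' + b') % 4 := by omega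
  rcases hBB b' hb'B b' hb'B with ⟨h2, h2r⟩ | ⟨h2, h2r⟩ <;>
    rcases hBB b hbB b' hb'B with ⟨h1, h1r⟩ | ⟨h1, h1r⟩ <;>
    simp only [Set.mem_ofPred_eq] at h1r h2r
  · exact add_notMem_A₁ h2 hsmall.le h1
  · omega
  · omega
  · exact add_notMem_A₂ h2 (lt_of_le_of_lt (by nlinarith) hsmall) h1

end ThreeQuarters

theorem example_three_quarters_no_BB :
    hasDensity (({m : ℕ | ∃ n : ℕ, 1 ≤ n ∧ 4 ^ n ≤ m ∧ (m : ℝ) < (2 - 1 / n) * 4 ^ n}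
          \ {m : ℕ | m % 4 = 0})
        ∪ ({m : ℕ | ∃ n : ℕ, 1 ≤ n ∧ (2 + 1 / n) * 4 ^ n ≤ (m : ℝ) ∧ m < 4 ^ (n + 1)}
          \ {m : ℕ | m % 4 = 2})) (3 / 4) ∧
    ∀ B : Set ℕ, B.Infinite →
      ¬ (∀ b₁ ∈ B, ∀ b₂ ∈ B,
          b₁ + b₂ ∈
            ({m : ℕ | ∃ n : ℕ, 1 ≤ n ∧ 4 ^ n ≤ m ∧ (m : ℝ) < (2 - 1 / n) * 4 ^ n}
                \ {m : ℕ | m % 4 = 0})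
              ∪ ({m : ℕ | ∃ n : ℕ, 1 ≤ n ∧ (2 + 1 / n) * 4 ^ n ≤ (m : ℝ) ∧ m < 4 ^ (n + 1)}
                \ {m : ℕ | m % 4 = 2})) :=
  ⟨ThreeQuarters.hasDensity_A', fun _ hB => ThreeQuarters.not_forall_add_mem_A' hB⟩
end

section
/- Suppose that for all A ⊆ ℕ with d̄(A) > 5/6 there exists an infinite B ⊆ ℕ with B + B ⊆ A, and that for all A ⊆ ℕ with d̲(A) > 3/4 there exists an infinite B ⊆ ℕ with B + B ⊆ A. Then: if A, D ⊆ ℕ satisfy d̄(A ∩ 2D) > 1/3, there exists an infinite set B ⊆ D with B + B ⊆ A, where 2D = {2d : d ∈ D}. -/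
open Filter
open scoped Classical

lemma countIn_le (A : Set ℕ) (N : ℕ) : countIn A N ≤ N := by
  calc countIn A N ≤ (Finset.Icc 1 N).card := Finset.card_filter_le _ _
  _ = N := by simp

lemma countIn_union_of_disjoint {S T : Set ℕ} (h : ∀ n, n ∈ S → n ∉ T) (N : ℕ) :
    countIn (S ∪ T) N = countIn S N + countIn T N := by
  unfold countIn
  rw [← Finset.card_union_of_disjoint (by rw [Finset.disjoint_filter]; exact fun x _ hs ht => h x hs ht : Disjoint ((Finset.Icc 1 N).filter (fun n => n ∈ S)) ((Finset.Icc 1 N).filter (fun n => n ∈ T)))]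
  congr 1
  ext n; simp [Set.mem_union, and_or_left]

lemma countIn_odd (N : ℕ) : countIn {m | Odd m} N = (N + 1) / 2 := by
  have key : ∀ M, ((Finset.Icc 1 M).filter (fun n => Odd n)).card = (M+1)/2 := by
    intro M; induction M with
    | zero => simp
    | succ n ih =>
      rw [show Finset.Icc 1 (n+1) = insert (n+1) (Finset.Icc 1 n) by
        ext m; simp [Finset.mem_Icc]; omega, Finset.filter_insert]
      by_cases h : Odd (n+1)
      · rw [if_pos h, Finset.card_insert_of_notMem (by simp), ih]
        obtain ⟨k,hk⟩ := h; omega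
      · rw [if_neg h, ih]; rw [Nat.not_odd_iff_even] at h; obtain ⟨k,hk⟩ := h; omega
  unfold countIn
  rw [← key N]
  congr 1
  ext n; simp

lemma tendsto_odd_density :
    Tendsto (fun N => (countIn {m | Odd m} N : ℝ) / N) atTop (nhds (1/2)) := by
  have h1 : Tendsto (fun N : ℕ => 1/2 + (1/2)/(N:ℝ)) atTop (nhds (1/2)) := by
    simpa using tendsto_const_nhds.add (tendsto_const_div_atTop_nhds_zero_nat (1/2 : ℝ))
  apply tendsto_of_tendsto_of_tendsto_of_le_of_le' tendsto_const_nhds h1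
  · filter_upwards [eventually_ge_atTop 1] with N hN
    have hN' : (0:ℝ) < N := by exact_mod_cast hN
    rw [countIn_odd, le_div_iff₀ hN']
    have : N ≤ 2 * ((N+1)/2) := by omega
    have hc : (N:ℝ) ≤ 2 * ↑((N+1)/2) := by exact_mod_cast this
    linarith
  · filter_upwards [eventually_ge_atTop 1] with N hN
    have hN' : (0:ℝ) < N := by exact_mod_cast hN
    rw [countIn_odd, div_le_iff₀ hN']
    have : 2 * ((N+1)/2) ≤ N + 1 := by omega
    have hc : 2 * (↑((N+1)/2) : ℝ) ≤ (N:ℝ) + 1 := by exact_mod_cast this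
    have : (1/2 + (1/2)/(N:ℝ)) * N = (N:ℝ)/2 + 1/2 := by field_simp
    rw [this]; linarith

lemma density_nonneg (A : Set ℕ) (N : ℕ) : 0 ≤ (countIn A N : ℝ) / N := by positivity

lemma density_le_one (A : Set ℕ) (N : ℕ) : (countIn A N : ℝ) / N ≤ 1 := by
  rcases Nat.eq_zero_or_pos N with h | h
  · simp [h]
  · rw [div_le_one (by exact_mod_cast h)]
    exact_mod_cast countIn_le A N

theorem sumset_in_A_cap_2D
    (h1 : ∀ A : Set ℕ, 5 / 6 < upperDensity A →
      ∃ B : Set ℕ, B.Infinite ∧ ∀ b₁ ∈ B, ∀ b₂ ∈ B, b₁ + b₂ ∈ A)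
    (h2 : ∀ A : Set ℕ, 3 / 4 < lowerDensity A →
      ∃ B : Set ℕ, B.Infinite ∧ ∀ b₁ ∈ B, ∀ b₂ ∈ B, b₁ + b₂ ∈ A) :
    ∀ A D : Set ℕ, 1 / 3 < upperDensity (A ∩ {m : ℕ | ∃ d ∈ D, m = 2 * d}) →
      ∃ B ⊆ D, B.Infinite ∧ ∀ b₁ ∈ B, ∀ b₂ ∈ B, b₁ + b₂ ∈ A := by
  intro A D hAD
  set S : Set ℕ := A ∩ {m : ℕ | ∃ d ∈ D, m = 2 * d} with hS
  set A' : Set ℕ := S ∪ {m | Odd m} with hA'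
  -- elements of S are even
  have hSeven : ∀ n ∈ S, ¬ Odd n := by
    rintro n ⟨_, d, _, rfl⟩
    simp [Nat.odd_iff, Nat.mul_mod_right]
  have hcount : ∀ N, countIn A' N = countIn S N + countIn {m | Odd m} N :=
    countIn_union_of_disjoint hSeven
  -- the density functions
  set f : ℕ → ℝ := fun N => (countIn S N : ℝ) / N with hf
  set g : ℕ → ℝ := fun N => (countIn {m | Odd m} N : ℝ) / N with hg
  have hsum : ∀ N, (countIn A' N : ℝ) / N = f N + g N := by
    intro N
    rw [hcount N]
    push_cast
    ring
  have hgt : Tendsto g atTop (nhds (1/2)) := tendsto_odd_density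
  set ε : ℝ := upperDensity S - 1/3 with hε
  have hεpos : 0 < ε := by simp [hε]; linarith [hAD]
  -- frequently f N > 1/3 + ε/2
  have hfreq : ∃ᶠ N in atTop, 1/3 + ε/2 < f N := by
    apply frequently_lt_of_lt_limsup
    · exact IsBoundedUnder.isCoboundedUnder_le
        ⟨0, eventually_map.mpr (Eventually.of_forall (density_nonneg S))⟩
    · show (1:ℝ)/3 + ε/2 < upperDensity S
      rw [hε]; linarith
  have hev : ∀ᶠ N in atTop, 1/2 - ε/4 < g N :=
    hgt.eventually (eventually_gt_nhds (by linarith))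
  have hA'dens : 5/6 < upperDensity A' := by
    have hkey : ∃ᶠ N in atTop, 5/6 + ε/4 ≤ (countIn A' N : ℝ) / N := by
      apply (hfreq.and_eventually hev).mono
      rintro N ⟨h₁, h₂⟩
      rw [hsum N]; linarith
    have := le_limsup_of_frequently_le hkey
      ⟨1, eventually_map.mpr (Eventually.of_forall (density_le_one A'))⟩
    unfold upperDensity
    linarith
  obtain ⟨B', hB'inf, hB'sum⟩ := h1 A' hA'dens
  -- split B' by parity
  have hsplit : B' = (B' ∩ {n | n % 2 = 0}) ∪ (B' ∩ {n | n % 2 = 1}) := by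
    ext n
    constructor
    · intro hn
      rcases Nat.mod_two_eq_zero_or_one n with h | h
      · exact Or.inl ⟨hn, h⟩
      · exact Or.inr ⟨hn, h⟩
    · rintro (⟨hn, _⟩ | ⟨hn, _⟩) <;> exact hn
  have : (B' ∩ {n | n % 2 = 0}).Infinite ∨ (B' ∩ {n | n % 2 = 1}).Infinite := by
    rw [← Set.infinite_union]; rw [← hsplit]; exact hB'inf
  -- in either case, take that piece
  obtain ⟨r, hBinf⟩ : ∃ r, (B' ∩ {n | n % 2 = r}).Infinite := by
    rcases this with h | h
    · exact ⟨0, h⟩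
    · exact ⟨1, h⟩
  set B : Set ℕ := B' ∩ {n | n % 2 = r} with hB
  have hmem : ∀ b₁ ∈ B, ∀ b₂ ∈ B, b₁ + b₂ ∈ S := by
    rintro b₁ ⟨hb₁, hr₁⟩ b₂ ⟨hb₂, hr₂⟩
    have := hB'sum b₁ hb₁ b₂ hb₂
    rcases this with h | h
    · exact h
    · exfalso
      simp only [Set.mem_setOf_eq, Nat.odd_iff] at h hr₁ hr₂
      omega
  refine ⟨B, ?_, hBinf, ?_⟩
  · intro b hb
    obtain ⟨_, d, hd, hbd⟩ := hmem b hb b hb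
    have : b = d := by omega
    rwa [this]
  · intro b₁ hb₁ b₂ hb₂
    exact (hmem b₁ hb₁ b₂ hb₂).1
end
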